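/- Let G be an (s,k)-edge-connected graph with k ≥ 2, deg(s) odd, deg(s) ≥ 3, deg(s) ≠ 4, and suppose two independent sets of size ⌈deg(s)/2⌉ in L(G,s,k) have nonempty intersection, with corresponding dangerous sets A₁ and A₂. Then A₁ ∪ A₂ ∪ {s} = V(G), i.e., there are no vertices outside A₁∪A₂∪{s}. -/

import Mathlib

/-- A finite loopless multigraph. -/
structure Multigraph where
  V : Type
  E : Type
  [finV : Fintype V]
  [finE : Fintype E]
  [decV : DecidableEq V]
  [decE : DecidableEq E]
  ends : E → Sym2 V
  loopless : ∀ e, ¬ (ends e).IsDiag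

attribute [instance] Multigraph.finV Multigraph.finE Multigraph.decV Multigraph.decE

namespace Multigraph

variable (G : Multigraph)

/-- Walks in a multigraph, recorded as lists of edges. -/
inductive IsWalk (G : Multigraph) : G.V → G.V → List G.E → Prop
  | nil (v : G.V) : IsWalk G v v []
  | cons {u v w : G.V} {e : G.E} {p : List G.E} :
      G.ends e = s(u, v) → IsWalk G v w p → IsWalk G u w (e :: p)

/-- There exist `k` pairwise edge-disjoint paths from `u` to `v`. -/
def EdgeDisjointPaths (u v : G.V) (k : ℕ) : Prop :=
  ∃ P : Fin k → List G.E, (∀ i, G.IsWalk u v (P i)) ∧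
    ∀ i j, i ≠ j → ∀ e, e ∈ P i → e ∉ P j

/-- There exist `k` pairwise edge-disjoint paths from `u` to `v` using only
edges with both ends in `B`. -/
def EdgeDisjointPathsWithin (B : Set G.V) (u v : G.V) (k : ℕ) : Prop :=
  ∃ P : Fin k → List G.E,
    (∀ i, G.IsWalk u v (P i) ∧ ∀ e ∈ P i, ∀ w ∈ G.ends e, w ∈ B) ∧
    ∀ i j, i ≠ j → ∀ e, e ∈ P i → e ∉ P j

/-- `G` is `(s,k)`-edge-connected: it has at least three vertices and any two
vertices different from `s` are joined by `k` pairwise edge-disjoint paths. -/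
def SKConnected (s : G.V) (k : ℕ) : Prop :=
  3 ≤ Fintype.card G.V ∧
    ∀ u v : G.V, u ≠ s → v ≠ s → G.EdgeDisjointPaths u v k

/-- The edge cut `δ(A)`: edges with exactly one end in `A`. -/
def cutSet (A : Set G.V) : Set G.E :=
  {e | ∃ u v, G.ends e = s(u, v) ∧ u ∈ A ∧ v ∉ A}

/-- `δ(A:B)`: edges with one end in `A` and the other in `B`. -/
def between (A B : Set G.V) : Set G.E :=
  {e | ∃ u v, G.ends e = s(u, v) ∧ u ∈ A ∧ v ∈ B}

/-- The set of edges incident with `s`. -/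
def incEdges (s : G.V) : Set G.E := {e | s ∈ G.ends e}

/-- The degree of `s`: the number of edges incident with `s` (counted with
multiplicity). -/
noncomputable def deg (s : G.V) : ℕ := (G.incEdges s).ncard

/-- The set of neighbours of `s`. -/
def neighborSet (s : G.V) : Set G.V := {v | ∃ e, G.ends e = s(s, v)}

/-- `A ⊆ V(G)\{s}` is `k`-dangerous if it is nonempty, misses some non-`s`
vertex, and `|δ(A)| ≤ k+1`. -/
def Dangerous (s : G.V) (k : ℕ) (A : Set G.V) : Prop :=
  A.Nonempty ∧ s ∉ A ∧ (A ∪ {s})ᶜ.Nonempty ∧ (G.cutSet A).ncard ≤ k + 1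

/-- The other end of an edge incident with `s` (junk value `s` otherwise). -/
def otherEnd (s : G.V) (e : G.E) : G.V :=
  if h : s ∈ G.ends e then Sym2.Mem.other' h else s

/-- The lift of `G` at `s` obtained from the pair of edges `e, f`: both are
deleted and an edge joining their other ends is added (no edge is added if the
other ends coincide, i.e. `e` and `f` are parallel). -/
def lift (s : G.V) (e f : G.E) : Multigraph where
  V := G.V
  E := {x : G.E // x ≠ e ∧ x ≠ f} ⊕ PLift (G.otherEnd s e ≠ G.otherEnd s f)
  finV := inferInstance
  finE := by
    haveI : Fintype (PLift (G.otherEnd s e ≠ G.otherEnd s f)) := by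
      by_cases h : G.otherEnd s e ≠ G.otherEnd s f
      · exact Fintype.ofSubsingleton ⟨h⟩
      · haveI : IsEmpty (PLift (G.otherEnd s e ≠ G.otherEnd s f)) := ⟨fun x => h x.down⟩
        exact Fintype.ofIsEmpty
    infer_instance
  decV := inferInstance
  decE := by
    haveI : DecidableEq (PLift (G.otherEnd s e ≠ G.otherEnd s f)) :=
      fun a b => isTrue (Subsingleton.elim a b)
    infer_instance
  ends := fun x => match x with
    | Sum.inl y => G.ends y.1
    | Sum.inr _ => s(G.otherEnd s e, G.otherEnd s f)
  loopless := by
    rintro (y | h)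
    · exact G.loopless y.1
    · simpa using h.down

/-- The pair of edges `e, f` at `s` is `k`-liftable if the lift of `G` at
`e, f` is still `(s,k)`-edge-connected. -/
def IsLiftable (s : G.V) (k : ℕ) (e f : G.E) : Prop :=
  (G.lift s e f).SKConnected s k ∧ (G.lift s f e).SKConnected s k

/-- The `k`-lifting graph `L(G,s,k)`: vertices are the edges incident with
`s`, adjacent iff they form a `k`-liftable pair. -/
def liftingGraph (s : G.V) (k : ℕ) : SimpleGraph ↥(G.incEdges s) where
  Adj e f := e ≠ f ∧ G.IsLiftable s k e.1 f.1 ∧ G.IsLiftable s k f.1 e.1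
  symm := ⟨fun a b h => ⟨h.1.symm, h.2.2, h.2.1⟩⟩
  loopless := ⟨fun a h => h.1 rfl⟩

/-- A dangerous set corresponding to an independent set `I` of the lifting
graph: it contains the non-`s` ends of all edges of `I`. -/
def CorrDangerous (s : G.V) (k : ℕ) (I : Set ↥(G.incEdges s)) (A : Set G.V) : Prop :=
  G.Dangerous s k A ∧ ∀ e : ↥(G.incEdges s), e ∈ I → G.otherEnd s e.1 ∈ A

/-- A minimal dangerous set corresponding to `I`. -/
def MinCorrDangerous (s : G.V) (k : ℕ) (I : Set ↥(G.incEdges s)) (A : Set G.V) : Prop :=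
  G.CorrDangerous s k I A ∧ ∀ B, G.CorrDangerous s k I B → B ⊆ A → B = A

/-- Reachability in a multigraph. -/
def Reachable (u v : G.V) : Prop := ∃ p, G.IsWalk u v p

/-- Reachability avoiding a set `F` of edges. -/
def ReachableOutside (F : Set G.E) (u v : G.V) : Prop :=
  ∃ p, G.IsWalk u v p ∧ ∀ e ∈ p, e ∉ F

/-- Deleting the edge set `F` disconnects `G`. -/
def Disconnects (F : Set G.E) : Prop :=
  ∃ u v, G.Reachable u v ∧ ¬ G.ReachableOutside F u v

/-- A cut-edge: its deletion disconnects the graph. -/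
def IsCutEdge (e : G.E) : Prop := G.Disconnects {e}

/-- A minimal edge-cut: an inclusion-minimal set of edges whose deletion
disconnects the graph. -/
def IsMinimalCut (F : Set G.E) : Prop :=
  G.Disconnects F ∧ ∀ F' ⊂ F, ¬ G.Disconnects F'

/-- `G` has an `(s,r)`-path structure with blobs `B 0, …, B (n-1)`. -/
def PathStructure (s : G.V) (r : ℕ) {n : ℕ} (B : Fin n → Set G.V) : Prop :=
  3 ≤ n ∧
  (∀ i j, i ≠ j → Disjoint (B i) (B j)) ∧
  (⋃ i, B i) = {s}ᶜ ∧
  ∀ i : Fin n, ∀ h1 : 0 < i.1, ∀ h2 : i.1 < n - 1,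
    (G.cutSet (B i)).ncard = 2 * r + 1 ∧
    (G.between (B i) {s}).ncard = 1 ∧
    (G.between (B i) (B ⟨i.1 - 1, by omega⟩)).ncard = r ∧
    (G.between (B i) (B ⟨i.1 + 1, by omega⟩)).ncard = r

end Multigraph

section SimpleGraphDefs

variable {α : Type*}

/-- `I` is an independent set of a simple graph. -/
def IndepSet (H : SimpleGraph α) (I : Set α) : Prop :=
  ∀ a ∈ I, ∀ b ∈ I, ¬ H.Adj a b

/-- `I` is a maximal independent set. -/
def MaxIndepSet (H : SimpleGraph α) (I : Set α) : Prop :=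
  IndepSet H I ∧ ∀ J, IndepSet H J → I ⊆ J → J = I

/-- The independence graph of `H`: vertices are the maximal independent sets
of `H`, adjacent iff they intersect. -/
def independenceGraph (H : SimpleGraph α) :
    SimpleGraph {I : Set α // MaxIndepSet H I} where
  Adj I J := I ≠ J ∧ (I.1 ∩ J.1).Nonempty
  symm := ⟨fun I J h => ⟨h.1.symm, by rw [Set.inter_comm]; exact h.2⟩⟩
  loopless := ⟨fun I h => h.1 rfl⟩

/-- `H` is complete multipartite: non-adjacency is transitive. -/
def IsCompleteMultipartite (H : SimpleGraph α) : Prop :=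
  Transitive fun a b => ¬ H.Adj a b

/-- `H` is a star: there is a centre adjacent to exactly the other vertices,
which are pairwise non-adjacent. -/
def IsStarGraph (H : SimpleGraph α) : Prop :=
  ∃ c : α, ∀ a b, H.Adj a b ↔ (a ≠ b ∧ (a = c ∨ b = c))

end SimpleGraphDefs



namespace Multigraph

variable (G : Multigraph)

lemma exists_ends (e : G.E) : ∃ a b, G.ends e = s(a, b) :=
  Sym2.ind (fun a b => ⟨a, b, rfl⟩) (G.ends e)

lemma mem_cutSet_iff {A : Set G.V} {e : G.E} {a b : G.V} (h : G.ends e = s(a, b)) :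
    e ∈ G.cutSet A ↔ ((a ∈ A ∧ b ∉ A) ∨ (b ∈ A ∧ a ∉ A)) := by
  constructor
  · rintro ⟨u, v, huv, hu, hv⟩
    rw [h, Sym2.eq_iff] at huv
    rcases huv with ⟨rfl, rfl⟩ | ⟨rfl, rfl⟩
    · exact Or.inl ⟨hu, hv⟩
    · exact Or.inr ⟨hu, hv⟩
  · rintro (⟨ha, hb⟩ | ⟨hb, ha⟩)
    · exact ⟨a, b, h, ha, hb⟩
    · exact ⟨b, a, h.trans Sym2.eq_swap, hb, ha⟩

lemma otherEnd_spec {s : G.V} {e : G.E} (h : s ∈ G.ends e) :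
    G.ends e = s(s, G.otherEnd s e) ∧ G.otherEnd s e ≠ s := by
  have h1 : G.otherEnd s e = Sym2.Mem.other' h := dif_pos h
  constructor
  · rw [h1]; exact (Sym2.other_spec' h).symm
  · rw [h1]
    intro hs
    have hd := G.loopless e
    rw [← Sym2.other_spec' h, hs] at hd
    simp at hd

lemma walk_cross {X : Set G.V} {u v : G.V} {p : List G.E}
    (h : G.IsWalk u v p) (hu : u ∈ X) (hv : v ∉ X) :
    ∃ e, e ∈ p ∧ e ∈ G.cutSet X := by
  induction h with
  | nil w => exact absurd hu hv
  | cons he hw ih =>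
    rename_i u' v' w' e p'
    by_cases hv' : v' ∈ X
    · obtain ⟨f, hf1, hf2⟩ := ih hv' hv
      exact ⟨f, List.mem_cons_of_mem _ hf1, hf2⟩
    · exact ⟨e, List.mem_cons_self, u', v', he, hu, hv'⟩

lemma cut_lb {s : G.V} {k : ℕ} (hcon : G.SKConnected s k) {X : Set G.V}
    (hne : X.Nonempty) (hs : s ∉ X) (hc : (X ∪ {s})ᶜ.Nonempty) :
    k ≤ (G.cutSet X).ncard := by
  obtain ⟨u, hu⟩ := hne
  obtain ⟨v, hv⟩ := hc
  simp only [Set.mem_compl_iff, Set.mem_union, Set.mem_singleton_iff, not_or] at hv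
  have hus : u ≠ s := fun h => hs (h ▸ hu)
  obtain ⟨P, hP, hdisj⟩ := hcon.2 u v hus hv.2
  choose f hf using fun i => G.walk_cross (hP i) hu hv.1
  have hinj : Function.Injective f := by
    intro i j hij
    by_contra hne'
    exact hdisj i j hne' (f i) (hf i).1 (hij ▸ (hf j).1)
  calc k = (Finset.image f Finset.univ).card := by
        rw [Finset.card_image_of_injective _ hinj, Finset.card_univ, Fintype.card_fin]
    _ = ((Finset.image f Finset.univ : Finset G.E) : Set G.E).ncard := by
        rw [Set.ncard_coe_finset]
    _ ≤ (G.cutSet X).ncard := by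
        apply Set.ncard_le_ncard _ (Set.toFinite _)
        intro e he
        simp only [Finset.coe_image, Finset.coe_univ, Set.image_univ, Set.mem_range] at he
        obtain ⟨i, rfl⟩ := he
        exact (hf i).2

lemma cut_submod (A B : Set G.V) :
    (G.cutSet (A ∩ B)).ncard + (G.cutSet (A ∪ B)).ncard ≤
      (G.cutSet A).ncard + (G.cutSet B).ncard := by
  set X := G.cutSet (A ∩ B)
  set Y := G.cutSet (A ∪ B)
  set S := G.cutSet A
  set T := G.cutSet B
  have key : ∀ e : G.E, (e ∈ X ∪ Y → e ∈ S ∪ T) ∧ (e ∈ X ∩ Y → e ∈ S ∩ T) := by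
    intro e
    obtain ⟨a, b, hab⟩ := G.exists_ends e
    have h1 := G.mem_cutSet_iff (A := A ∩ B) hab
    have h2 := G.mem_cutSet_iff (A := A ∪ B) hab
    have h3 := G.mem_cutSet_iff (A := A) hab
    have h4 := G.mem_cutSet_iff (A := B) hab
    simp only [Set.mem_union, Set.mem_inter_iff] at h1 h2 h3 h4
    simp only [X, Y, S, T, Set.mem_union, Set.mem_inter_iff, h1, h2, h3, h4]
    by_cases pa : a ∈ A <;> by_cases pb : b ∈ A <;>
      by_cases qa : a ∈ B <;> by_cases qb : b ∈ B <;> simp [pa, pb, qa, qb]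
  have hsub1 : X ∪ Y ⊆ S ∪ T := fun e he => (key e).1 he
  have hsub2 : X ∩ Y ⊆ S ∩ T := fun e he => (key e).2 he
  have e1 := Set.ncard_union_add_ncard_inter X Y (Set.toFinite _) (Set.toFinite _)
  have e2 := Set.ncard_union_add_ncard_inter S T (Set.toFinite _) (Set.toFinite _)
  have i1 := Set.ncard_le_ncard hsub1 (Set.toFinite _)
  have i2 := Set.ncard_le_ncard hsub2 (Set.toFinite _)
  omega

end Multigraph


/-- for two intersecting independent sets of the maximum size
`⌈deg(s)/2⌉` (with `deg(s)` odd, `≥ 3`, `≠ 4`), corresponding dangerous sets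
cover all of `V(G) \ {s}`. -/
theorem large_indep_dangerous_cover (G : Multigraph) (s : G.V) (k : ℕ)
    (hk : 2 ≤ k) (hcon : G.SKConnected s k)
    (hodd : Odd (G.deg s)) (hdeg3 : 3 ≤ G.deg s) (hdeg4 : G.deg s ≠ 4)
    (I₁ I₂ : Set ↥(G.incEdges s))
    (hi₁ : IndepSet (G.liftingGraph s k) I₁)
    (hi₂ : IndepSet (G.liftingGraph s k) I₂)
    (hne : I₁ ≠ I₂)
    (hc₁ : I₁.ncard = (G.deg s + 1) / 2) (hc₂ : I₂.ncard = (G.deg s + 1) / 2)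
    (hint : (I₁ ∩ I₂).Nonempty)
    (A₁ A₂ : Set G.V)
    (hA₁ : G.CorrDangerous s k I₁ A₁) (hA₂ : G.CorrDangerous s k I₂ A₂) :
    A₁ ∪ A₂ ∪ {s} = Set.univ := by
  by_contra hcov
  obtain ⟨v, hv⟩ := (Set.ne_univ_iff_exists_notMem _).mp hcov
  simp only [Set.mem_union, Set.mem_singleton_iff, not_or] at hv
  obtain ⟨⟨hv1, hv2⟩, hv3⟩ := hv
  obtain ⟨⟨hA₁ne, hsA₁, hA₁co, hA₁cut⟩, hA₁corr⟩ := hA₁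
  obtain ⟨⟨hA₂ne, hsA₂, hA₂co, hA₂cut⟩, hA₂corr⟩ := hA₂
  set B := A₁ ∪ A₂ with hB
  set D := (B ∪ {s})ᶜ with hD
  set C := A₁ ∩ A₂ with hC
  have hsB : s ∉ B := fun h => h.elim hsA₁ hsA₂
  have hsD : s ∉ D := fun h => h (Or.inr rfl)
  have hmemD : ∀ x : G.V, x ∈ D ↔ (x ∉ B ∧ x ≠ s) := by
    intro x
    rw [hD]
    simp only [Set.mem_compl_iff, Set.mem_union, Set.mem_singleton_iff, not_or]
    try tauto
  -- the common witness w
  obtain ⟨x, hx₁, hx₂⟩ := hint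
  have hxinc : x.1 ∈ G.incEdges s := x.2
  obtain ⟨hxspec, hxwne⟩ := G.otherEnd_spec hxinc
  set w := G.otherEnd s x.1 with hw
  have hw₁ : w ∈ A₁ := hA₁corr x hx₁
  have hw₂ : w ∈ A₂ := hA₂corr x hx₂
  have hvD : v ∈ D := (hmemD v).mpr ⟨fun h => h.elim hv1 hv2, hv3⟩
  -- lower bounds from connectivity
  have hCk : k ≤ (G.cutSet C).ncard := by
    have hCne : C.Nonempty := ⟨w, hw₁, hw₂⟩
    apply G.cut_lb hcon hCne (fun h => hsA₁ h.1)
    refine ⟨v, ?_⟩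
    simp only [Set.mem_compl_iff, Set.mem_union, Set.mem_singleton_iff, not_or]
    exact ⟨fun h => hv1 h.1, hv3⟩
  have hDk : k ≤ (G.cutSet D).ncard := by
    have hDne : D.Nonempty := ⟨v, hvD⟩
    apply G.cut_lb hcon hDne hsD
    refine ⟨w, ?_⟩
    simp only [Set.mem_compl_iff, Set.mem_union, Set.mem_singleton_iff, not_or]
    exact ⟨fun h => ((hmemD w).mp h).1 (Or.inl hw₁), hxwne⟩
  -- submodularity
  have hsubmod := G.cut_submod A₁ A₂
  rw [← hC, ← hB] at hsubmod
  -- split cuts at s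
  set SB := G.cutSet B ∩ G.incEdges s with hSB
  set NB := G.cutSet B \ G.incEdges s with hNB
  set SD := G.cutSet D ∩ G.incEdges s with hSD
  set ND := G.cutSet D \ G.incEdges s with hND
  have hBsplit : SB.ncard + NB.ncard = (G.cutSet B).ncard :=
    Set.ncard_inter_add_ncard_diff_eq_ncard _ _ (Set.toFinite _)
  have hDsplit : SD.ncard + ND.ncard = (G.cutSet D).ncard :=
    Set.ncard_inter_add_ncard_diff_eq_ncard _ _ (Set.toFinite _)
  -- the non-s parts of the two cuts coincide
  have hkey : ∀ e : G.E, s ∉ G.ends e → (e ∈ G.cutSet B ↔ e ∈ G.cutSet D) := by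
    intro e hs'
    obtain ⟨a, b, hab⟩ := G.exists_ends e
    have has : a ≠ s := by rintro rfl; exact hs' (hab ▸ Sym2.mem_mk_left a b)
    have hbs : b ≠ s := by rintro rfl; exact hs' (hab ▸ Sym2.mem_mk_right a b)
    rw [G.mem_cutSet_iff hab, G.mem_cutSet_iff hab]
    simp only [hmemD]
    constructor
    · rintro (⟨h1, h2⟩ | ⟨h1, h2⟩)
      · exact Or.inr ⟨⟨h2, hbs⟩, fun h' => h'.1 h1⟩
      · exact Or.inl ⟨⟨h2, has⟩, fun h' => h'.1 h1⟩
    · rintro (⟨⟨h1, _⟩, h2⟩ | ⟨⟨h1, _⟩, h2⟩)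
      · rcases not_and_or.mp h2 with h | h
        · exact Or.inr ⟨not_not.mp h, h1⟩
        · exact absurd hbs (by simpa using h)
      · rcases not_and_or.mp h2 with h | h
        · exact Or.inl ⟨not_not.mp h, h1⟩
        · exact absurd has (by simpa using h)
  have hNeq : NB = ND := by
    ext e
    simp only [hNB, hND, Set.mem_diff, Multigraph.incEdges, Set.mem_setOf_eq]
    constructor
    · rintro ⟨h1, h2⟩
      exact ⟨(hkey e h2).mp h1, h2⟩
    · rintro ⟨h1, h2⟩
      exact ⟨(hkey e h2).mpr h1, h2⟩
  -- the s-edges split between B and D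
  have hSunion : SB ∪ SD = G.incEdges s := by
    apply Set.Subset.antisymm
    · rintro e (he | he) <;> exact he.2
    · intro e he
      obtain ⟨hspec, hune⟩ := G.otherEnd_spec he
      by_cases hu : G.otherEnd s e ∈ B
      · exact Or.inl ⟨(G.mem_cutSet_iff hspec).mpr (Or.inr ⟨hu, hsB⟩), he⟩
      · have huD : G.otherEnd s e ∈ D := (hmemD _).mpr ⟨hu, hune⟩
        exact Or.inr ⟨(G.mem_cutSet_iff hspec).mpr (Or.inr ⟨huD, hsD⟩), he⟩
  have hSdisj : Disjoint SB SD := by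
    rw [Set.disjoint_left]
    rintro e ⟨hc1, he⟩ ⟨hc2, _⟩
    obtain ⟨hspec, hune⟩ := G.otherEnd_spec he
    have h1 : G.otherEnd s e ∈ B := by
      rcases (G.mem_cutSet_iff hspec).mp hc1 with ⟨h, _⟩ | ⟨h, _⟩
      · exact absurd h hsB
      · exact h
    have h2 : G.otherEnd s e ∈ D := by
      rcases (G.mem_cutSet_iff hspec).mp hc2 with ⟨h, _⟩ | ⟨h, _⟩
      · exact absurd h hsD
      · exact h
    exact ((hmemD _).mp h2).1 h1
  have hScount : SB.ncard + SD.ncard = G.deg s := by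
    rw [← Set.ncard_union_eq hSdisj (Set.toFinite _) (Set.toFinite _), hSunion]
    rfl
  -- lower bound on the s-edges into B
  have hIun : (G.deg s + 1) / 2 + 1 ≤ (I₁ ∪ I₂).ncard := by
    by_contra h
    push_neg at h
    have h1 : I₁ = I₁ ∪ I₂ :=
      Set.eq_of_subset_of_ncard_le Set.subset_union_left (by omega) (Set.toFinite _)
    have h2 : I₂ = I₁ ∪ I₂ :=
      Set.eq_of_subset_of_ncard_le Set.subset_union_right (by omega) (Set.toFinite _)
    exact hne (h1.trans h2.symm)
  have hsubSB : Subtype.val '' (I₁ ∪ I₂) ⊆ SB := by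
    rintro e ⟨y, hy, rfl⟩
    have hyinc : y.1 ∈ G.incEdges s := y.2
    obtain ⟨hspec, _⟩ := G.otherEnd_spec hyinc
    have hyB : G.otherEnd s y.1 ∈ B := by
      rcases hy with h | h
      · exact Or.inl (hA₁corr y h)
      · exact Or.inr (hA₂corr y h)
    exact ⟨(G.mem_cutSet_iff hspec).mpr (Or.inr ⟨hyB, hsB⟩), hyinc⟩
  have hSBlb : (G.deg s + 1) / 2 + 1 ≤ SB.ncard := by
    calc (G.deg s + 1) / 2 + 1 ≤ (I₁ ∪ I₂).ncard := hIun
      _ = (Subtype.val '' (I₁ ∪ I₂)).ncard :=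
          (Set.ncard_image_of_injective _ Subtype.val_injective).symm
      _ ≤ SB.ncard := Set.ncard_le_ncard hsubSB (Set.toFinite _)
  -- final arithmetic
  obtain ⟨t, ht⟩ := hodd
  have hNeq' : NB.ncard = ND.ncard := by rw [hNeq]
  omega
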